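/- For τ in the upper half-plane and z ∈ ℂ with ϑ₁₀(2τ,z), ϑ₀₀(2τ,z), ϑ₁₀(τ,z) all nonzero, one has ϑ₀₀(2τ,z)/ϑ₁₀(2τ,z) − ϑ₁₀(2τ,z)/ϑ₀₀(2τ,z) = (η(τ/2)² / η(2τ)²) · ϑ₀₁(τ,z)/ϑ₁₀(τ,z). -/

import Mathlib

/-!
Multiplying two theta series and regrouping the double sum over `(m, n)` according to the parity
of `m + n` gives the duplication formulas
`θ₀₁(τ,z) θ₀₁(τ,0) = θ₀₀(2τ,z)² - θ₁₀(2τ,z)²` and `θ₁₀(τ,z) θ₁₀(τ,0) = 2 θ₀₀(2τ,z) θ₁₀(2τ,z)`,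
which reduce the claim to `2 θ₀₁(τ,0) η(2τ)² = θ₁₀(τ,0) η(τ/2)²`. That identity between theta
constants follows from the Jacobi triple product at `x = -1` and `x = q`. The triple product is
the limit `m → ∞` of its finite form
`∑ₙ [2m, m+n]_{q²} xⁿ q^{n²} = ∏_{j<m} (1 + x q^{2j+1}) (1 + x⁻¹ q^{2j+1})`, proved by induction
on `m` from a three-term recurrence of the Gaussian binomials; the coefficients tend to
`1 / ∏ (1 - q^{2j+2})` and stay bounded, so dominated convergence applies.
-/

open Real Complex Filter Topology

noncomputable section

noncomputable def theta00 (τ z : ℂ) : ℂ :=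
  ∑' n : ℤ, Complex.exp (2*(π:ℂ)*Complex.I*(n:ℂ)*z) *
    Complex.exp (2*(π:ℂ)*Complex.I*τ*((n:ℂ)^2/2))

noncomputable def theta01 (τ z : ℂ) : ℂ :=
  ∑' n : ℤ, (-1:ℂ)^n * Complex.exp (2*(π:ℂ)*Complex.I*(n:ℂ)*z) *
    Complex.exp (2*(π:ℂ)*Complex.I*τ*((n:ℂ)^2/2))

noncomputable def theta10 (τ z : ℂ) : ℂ :=
  ∑' n : ℤ, Complex.exp (2*(π:ℂ)*Complex.I*((n:ℂ)+1/2)*z) *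
    Complex.exp (2*(π:ℂ)*Complex.I*τ*((1/2)*((n:ℂ)+1/2)^2))

noncomputable def theta11 (τ z : ℂ) : ℂ :=
  Complex.I * ∑' n : ℤ, (-1:ℂ)^n * Complex.exp (2*(π:ℂ)*Complex.I*((n:ℂ)+1/2)*z) *
    Complex.exp (2*(π:ℂ)*Complex.I*τ*((1/2)*((n:ℂ)+1/2)^2))

noncomputable def dedekindEta (τ : ℂ) : ℂ :=
  Complex.exp ((π:ℂ)*Complex.I*τ/12) *
    ∏' n : ℕ, (1 - Complex.exp (2*(π:ℂ)*Complex.I*τ*((n:ℂ)+1)))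

lemma norm_pow_lt_one {q : ℂ} (hq : ‖q‖ < 1) {k : ℕ} (hk : k ≠ 0) : ‖q ^ k‖ < 1 :=
  (norm_pow q k).trans_lt (pow_lt_one₀ (norm_nonneg q) hq hk)

lemma one_sub_pow_ne_zero {q : ℂ} (hq : ‖q‖ < 1) {k : ℕ} (hk : k ≠ 0) : 1 - q ^ k ≠ 0 := by
  refine sub_ne_zero.mpr fun h => ?_
  simpa [← h] using norm_pow_lt_one hq hk

lemma multipliable_one_add_mul_pow {q : ℂ} (hq : ‖q‖ < 1) (c : ℂ) {a : ℕ} (ha : a ≠ 0) (b : ℕ) :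
    Multipliable fun j : ℕ => 1 + c * q ^ (a * j + b) := by
  refine multipliable_one_add_of_summable ?_
  simp_rw [norm_mul, norm_pow, pow_add, pow_mul]
  exact ((summable_geometric_of_lt_one (by positivity)
    (pow_lt_one₀ (norm_nonneg q) hq ha)).mul_right _).mul_left _

lemma tprod_one_sub_pow_succ_ne_zero {q : ℂ} (hq : ‖q‖ < 1) : ∏' j : ℕ, (1 - q ^ (j + 1)) ≠ 0 := by
  simpa [sub_eq_add_neg] using tprod_one_add_ne_zero_of_summable (f := fun j : ℕ => -q ^ (j + 1))
    (fun j => by simpa [sub_eq_add_neg] using one_sub_pow_ne_zero hq j.succ_ne_zero)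
    (by simpa [norm_pow, pow_succ] using
      (summable_geometric_of_lt_one (norm_nonneg q) hq).mul_right ‖q‖)

lemma summable_of_eq_zero_of_lt_natAbs {f : ℤ → ℂ} (M : ℕ)
    (hf : ∀ n : ℤ, M < n.natAbs → f n = 0) : Summable f :=
  summable_of_ne_finset_zero (s := Finset.Icc (-(M : ℤ)) M) fun n hn =>
    hf n (by simp only [Finset.mem_Icc] at hn; omega)

lemma summable_mul_pow_pow {r s : ℝ} (hr : 0 ≤ r) (hs0 : 0 ≤ s) (hs : s < 1) :
    Summable fun n : ℕ => (r * s ^ n) ^ n := by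
  have hsmall : ∀ᶠ n : ℕ in atTop, r * s ^ n ≤ 1 / 2 := by
    have := (tendsto_pow_atTop_nhds_zero_of_lt_one hs0 hs).const_mul r
    rw [mul_zero] at this
    exact this.eventually (eventually_le_nhds (by norm_num))
  refine summable_of_isBigO_nat summable_geometric_two (Asymptotics.IsBigO.of_bound 1 ?_)
  filter_upwards [hsmall] with n hn
  rw [one_mul, norm_pow, norm_pow, Real.norm_of_nonneg (by positivity)]
  exact pow_le_pow_left₀ (by positivity) (hn.trans (by norm_num [Real.norm_of_nonneg])) n

lemma summable_norm_zpow_mul_zpow_sq (x : ℂ) {q : ℂ} (hq : ‖q‖ < 1) :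
    Summable fun n : ℤ => ‖x ^ n * q ^ (n ^ 2)‖ := by
  have key (y : ℂ) (n : ℕ) : ‖y ^ n * q ^ (n ^ 2)‖ = (‖y‖ * ‖q‖ ^ n) ^ n := by
    rw [norm_mul, norm_pow, norm_pow, mul_pow, ← pow_mul, sq]
  refine Summable.of_nat_of_neg ?_ ?_
  · refine (summable_mul_pow_pow (norm_nonneg x) (norm_nonneg q) hq).congr fun n => ?_
    rw [← key, zpow_natCast, ← Nat.cast_pow, zpow_natCast]
  · refine (summable_mul_pow_pow (norm_nonneg x⁻¹) (norm_nonneg q) hq).congr fun n => ?_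
    rw [← key, zpow_neg, zpow_natCast, neg_sq, ← Nat.cast_pow, zpow_natCast, inv_pow]

section CentralQBinom

variable {Q : ℂ}

def qPochhammer (Q : ℂ) (k : ℕ) : ℂ := ∏ j ∈ Finset.range k, (1 - Q ^ (j + 1))

/-- `1 / (Q; Q)_k`, extended by `0` to negative `k`, so that `centralQBinom Q m n` vanishes for
`|n| > m` and its recurrence needs no case distinction. -/
def qPochhammerInv (Q : ℂ) (k : ℤ) : ℂ := if 0 ≤ k then (qPochhammer Q k.toNat)⁻¹ else 0

/-- The Gaussian binomial coefficient `[2m, m+n]_Q`. -/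
def centralQBinom (Q : ℂ) (m : ℕ) (n : ℤ) : ℂ :=
  qPochhammer Q (2 * m) * qPochhammerInv Q (m - n) * qPochhammerInv Q (m + n)

lemma qPochhammer_succ (k : ℕ) : qPochhammer Q (k + 1) = qPochhammer Q k * (1 - Q ^ (k + 1)) :=
  Finset.prod_range_succ _ _

lemma qPochhammerInv_of_neg {k : ℤ} (hk : k < 0) : qPochhammerInv Q k = 0 :=
  if_neg (not_le.mpr hk)

lemma qPochhammerInv_sub_one (hQ : ‖Q‖ < 1) (k : ℤ) :
    qPochhammerInv Q (k - 1) = (1 - Q ^ k) * qPochhammerInv Q k := by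
  rcases lt_trichotomy k 0 with hk | rfl | hk
  · rw [qPochhammerInv_of_neg hk, qPochhammerInv_of_neg (by omega), mul_zero]
  · rw [zpow_zero, sub_self, zero_mul, qPochhammerInv_of_neg (by omega)]
  · obtain ⟨k, rfl⟩ : ∃ j : ℕ, k = j + 1 := ⟨(k - 1).toNat, by omega⟩
    rw [qPochhammerInv, qPochhammerInv, if_pos (by omega), if_pos (by omega), add_sub_cancel_right,
      Int.toNat_natCast, show ((k : ℤ) + 1).toNat = k + 1 by omega, qPochhammer_succ, mul_inv,
      ← Nat.cast_succ, zpow_natCast, mul_left_comm,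
      mul_inv_cancel₀ (one_sub_pow_ne_zero hQ k.succ_ne_zero), mul_one]

lemma centralQBinom_eq_zero {m : ℕ} {n : ℤ} (h : m < n.natAbs) : centralQBinom Q m n = 0 := by
  rcases le_or_gt 0 n with hn | hn
  · rw [centralQBinom, qPochhammerInv_of_neg (k := m - n) (by omega), mul_zero, zero_mul]
  · rw [centralQBinom, qPochhammerInv_of_neg (k := m + n) (by omega), mul_zero]

lemma centralQBinom_succ (hQ : ‖Q‖ < 1) (hQ0 : Q ≠ 0) (m : ℕ) (n : ℤ) :
    centralQBinom Q (m + 1) n = (1 + Q ^ (2 * m + 1)) * centralQBinom Q m n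
      + Q ^ ((m : ℤ) + 1 - n) * centralQBinom Q m (n - 1)
      + Q ^ ((m : ℤ) + 1 + n) * centralQBinom Q m (n + 1) := by
  obtain ⟨a, ha⟩ : ∃ a : ℤ, a = m - n := ⟨_, rfl⟩
  obtain ⟨b, hb⟩ : ∃ b : ℤ, b = m + n := ⟨_, rfl⟩
  have down (k : ℤ) : qPochhammerInv Q k = (1 - Q ^ (k + 1)) * qPochhammerInv Q (k + 1) := by
    simpa using qPochhammerInv_sub_one hQ (k + 1)
  have hP : qPochhammer Q (2 * (m + 1))
      = qPochhammer Q (2 * m) * (1 - Q ^ (2 * m + 1)) * (1 - Q ^ (2 * m + 2)) := by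
    rw [show 2 * (m + 1) = 2 * m + 1 + 1 by ring, qPochhammer_succ, qPochhammer_succ]
  have hab : Q ^ a * Q ^ b = Q ^ (2 * m) := by
    rw [← zpow_add₀ hQ0, show a + b = ((2 * m : ℕ) : ℤ) by push_cast; omega, zpow_natCast]
  -- every term becomes `(Q; Q)_{2m} / ((Q; Q)_{a+1} (Q; Q)_{b+1})` times a Laurent polynomial in
  -- `Q`, and the resulting identity only uses `a + b = 2m`
  simp only [centralQBinom]
  rw [show ((m + 1 : ℕ) : ℤ) - n = a + 1 by push_cast; omega,
    show ((m + 1 : ℕ) : ℤ) + n = b + 1 by push_cast; omega,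
    show (m : ℤ) - (n - 1) = a + 1 by omega, show (m : ℤ) + (n - 1) = b - 1 by omega,
    show (m : ℤ) - (n + 1) = a - 1 by omega, show (m : ℤ) + (n + 1) = b + 1 by omega,
    show (m : ℤ) + 1 - n = a + 1 by omega, show (m : ℤ) + 1 + n = b + 1 by omega,
    ← ha, ← hb, down a, down b, down (b - 1), down (a - 1), sub_add_cancel, sub_add_cancel, hP,
    down a, down b, zpow_add_one₀ hQ0, zpow_add_one₀ hQ0, pow_succ, pow_add, ← hab]
  ring

lemma tsum_centralQBinom_mul_eq_prod {x q : ℂ} (hq : ‖q‖ < 1) (hq0 : q ≠ 0) (hx : x ≠ 0)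
    (m : ℕ) : ∑' n : ℤ, centralQBinom (q ^ 2) m n * (x ^ n * q ^ (n ^ 2))
      = ∏ j ∈ Finset.range m, (1 + x * q ^ (2 * j + 1)) * (1 + x⁻¹ * q ^ (2 * j + 1)) := by
  induction m with
  | zero =>
    rw [tsum_eq_single 0 fun n hn => by rw [centralQBinom_eq_zero (by omega), zero_mul]]
    simp [centralQBinom, qPochhammerInv, qPochhammer]
  | succ m ih =>
    have sq_zpow (k : ℤ) : (q ^ 2) ^ k = q ^ (2 * k) := by rw [zpow_mul, zpow_ofNat]
    set T := fun n : ℤ => centralQBinom (q ^ 2) m n * (x ^ n * q ^ (n ^ 2)) with hT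
    set L := fun n : ℤ => (q ^ 2) ^ ((m : ℤ) + 1 - n) * centralQBinom (q ^ 2) m (n - 1)
      * (x ^ n * q ^ (n ^ 2)) with hL
    set U := fun n : ℤ => (q ^ 2) ^ ((m : ℤ) + 1 + n) * centralQBinom (q ^ 2) m (n + 1)
      * (x ^ n * q ^ (n ^ 2)) with hU
    have hTs : Summable T := summable_of_eq_zero_of_lt_natAbs m fun n hn => by
      simp only [hT, centralQBinom_eq_zero hn, zero_mul]
    have hLs : Summable L := summable_of_eq_zero_of_lt_natAbs (m + 1) fun n hn => by
      simp only [hL, centralQBinom_eq_zero (show m < (n - 1).natAbs by omega), mul_zero, zero_mul]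
    have hUs : Summable U := summable_of_eq_zero_of_lt_natAbs (m + 1) fun n hn => by
      simp only [hU, centralQBinom_eq_zero (show m < (n + 1).natAbs by omega), mul_zero, zero_mul]
    have lower : ∑' n, L n = (∑' n, T n) * (x * q ^ (2 * m + 1)) := by
      rw [← tsum_mul_right, ← (Equiv.addRight (1 : ℤ)).tsum_eq]
      refine tsum_congr fun n => ?_
      simp only [hT, hL, Equiv.coe_addRight, add_sub_cancel_right, sq_zpow, zpow_add_one₀ hx,
        show (n + 1) ^ 2 = n ^ 2 + (2 * n + 1) by ring, zpow_add₀ hq0]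
      rw [show 2 * ((m : ℤ) + 1 - (n + 1)) = ((2 * m + 1 : ℕ) : ℤ) - (2 * n + 1) by
        push_cast; ring, zpow_sub₀ hq0, zpow_natCast, zpow_add_one₀ hq0]
      field_simp
    have upper : ∑' n, U n = (∑' n, T n) * (x⁻¹ * q ^ (2 * m + 1)) := by
      rw [← tsum_mul_right, ← (Equiv.subRight (1 : ℤ)).tsum_eq]
      refine tsum_congr fun n => ?_
      simp only [hT, hU, Equiv.subRight_apply, sub_add_cancel, sq_zpow, zpow_sub_one₀ hx,
        show (n - 1) ^ 2 = n ^ 2 + (1 - 2 * n) by ring, zpow_add₀ hq0]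
      rw [show 2 * ((m : ℤ) + 1 + (n - 1)) = ((2 * m + 1 : ℕ) : ℤ) - (1 - 2 * n) by
        push_cast; ring, zpow_sub₀ hq0, zpow_natCast]
      field_simp
    calc ∑' n : ℤ, centralQBinom (q ^ 2) (m + 1) n * (x ^ n * q ^ (n ^ 2))
        = ∑' n : ℤ, ((1 + (q ^ 2) ^ (2 * m + 1)) * T n + (L n + U n)) := by
          refine tsum_congr fun n => ?_
          rw [centralQBinom_succ (norm_pow_lt_one hq two_ne_zero) (pow_ne_zero 2 hq0)]
          ring
      _ = (∑' n, T n) * ((1 + x * q ^ (2 * m + 1)) * (1 + x⁻¹ * q ^ (2 * m + 1))) := by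
          rw [(hTs.mul_left _).tsum_add (hLs.add hUs), hLs.tsum_add hUs, tsum_mul_left, lower,
            upper]
          field_simp
          ring
      _ = _ := by rw [ih, Finset.prod_range_succ]

lemma tendsto_qPochhammer (hQ : ‖Q‖ < 1) :
    Tendsto (qPochhammer Q) atTop (𝓝 (∏' j : ℕ, (1 - Q ^ (j + 1)))) :=
  (ModularForm.multipliable_one_sub_pow hQ).hasProd.tendsto_prod_nat

lemma tendsto_qPochhammerInv (hQ : ‖Q‖ < 1) :
    Tendsto (qPochhammerInv Q) atTop (𝓝 (∏' j : ℕ, (1 - Q ^ (j + 1)))⁻¹) := by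
  have htoNat : Tendsto Int.toNat atTop atTop :=
    tendsto_atTop_atTop.mpr fun b => ⟨b, fun k hk => by omega⟩
  refine (((tendsto_qPochhammer hQ).inv₀ (tprod_one_sub_pow_succ_ne_zero hQ)).comp htoNat).congr' ?_
  filter_upwards [eventually_ge_atTop 0] with k hk
  simp [qPochhammerInv, hk]

lemma tendsto_centralQBinom (hQ : ‖Q‖ < 1) (n : ℤ) :
    Tendsto (fun m => centralQBinom Q m n) atTop (𝓝 (∏' j : ℕ, (1 - Q ^ (j + 1)))⁻¹) := by
  have hsub : Tendsto (fun m : ℕ => (m : ℤ) - n) atTop atTop :=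
    tendsto_atTop_atTop.mpr fun b => ⟨(b + n).toNat, fun m hm => by omega⟩
  have hadd : Tendsto (fun m : ℕ => (m : ℤ) + n) atTop atTop :=
    tendsto_atTop_atTop.mpr fun b => ⟨(b - n).toNat, fun m hm => by omega⟩
  have h2m : Tendsto (fun m : ℕ => 2 * m) atTop atTop :=
    tendsto_atTop_atTop.mpr fun b => ⟨b, fun m hm => by omega⟩
  have hE := tprod_one_sub_pow_succ_ne_zero hQ
  rw [show (∏' j : ℕ, (1 - Q ^ (j + 1)))⁻¹
      = (∏' j : ℕ, (1 - Q ^ (j + 1))) * (∏' j : ℕ, (1 - Q ^ (j + 1)))⁻¹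
        * (∏' j : ℕ, (1 - Q ^ (j + 1)))⁻¹ by field_simp]
  exact (((tendsto_qPochhammer hQ).comp h2m).mul ((tendsto_qPochhammerInv hQ).comp hsub)).mul
    ((tendsto_qPochhammerInv hQ).comp hadd)

lemma exists_norm_centralQBinom_le (hQ : ‖Q‖ < 1) : ∃ C, ∀ m n, ‖centralQBinom Q m n‖ ≤ C := by
  obtain ⟨A, hA⟩ := (tendsto_qPochhammer hQ).norm.bddAbove_range
  obtain ⟨B, hB⟩ :=
    ((tendsto_qPochhammer hQ).inv₀ (tprod_one_sub_pow_succ_ne_zero hQ)).norm.bddAbove_range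
  have hB' (k : ℤ) : ‖qPochhammerInv Q k‖ ≤ B := by
    rcases le_or_gt 0 k with hk | hk
    · simpa [qPochhammerInv, hk] using hB ⟨k.toNat, rfl⟩
    · simpa [qPochhammerInv_of_neg hk] using (norm_nonneg _).trans (hB ⟨0, rfl⟩)
  refine ⟨A * B * B, fun m n => ?_⟩
  have hA' : ‖qPochhammer Q (2 * m)‖ ≤ A := hA ⟨2 * m, rfl⟩
  have hB0 : 0 ≤ B := (norm_nonneg _).trans (hB' 0)
  rw [centralQBinom, norm_mul, norm_mul]
  exact mul_le_mul (mul_le_mul hA' (hB' _) (norm_nonneg _) ((norm_nonneg _).trans hA')) (hB' _)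
    (norm_nonneg _) (mul_nonneg ((norm_nonneg _).trans hA') hB0)

end CentralQBinom

theorem jacobi_triple_product {x q : ℂ} (hq : ‖q‖ < 1) (hq0 : q ≠ 0) (hx : x ≠ 0) :
    ∑' n : ℤ, x ^ n * q ^ (n ^ 2) = (∏' j : ℕ, (1 - (q ^ 2) ^ (j + 1)))
      * ∏' j : ℕ, (1 + x * q ^ (2 * j + 1)) * (1 + x⁻¹ * q ^ (2 * j + 1)) := by
  have hq2 : ‖q ^ 2‖ < 1 := norm_pow_lt_one hq two_ne_zero
  obtain ⟨C, hC⟩ := exists_norm_centralQBinom_le hq2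
  have hsum : Tendsto (fun m : ℕ => ∑' n : ℤ, centralQBinom (q ^ 2) m n * (x ^ n * q ^ (n ^ 2)))
      atTop (𝓝 (∑' n : ℤ, (∏' j : ℕ, (1 - (q ^ 2) ^ (j + 1)))⁻¹ * (x ^ n * q ^ (n ^ 2)))) :=
    tendsto_tsum_of_dominated_convergence ((summable_norm_zpow_mul_zpow_sq x hq).mul_left C)
      (fun n => (tendsto_centralQBinom hq2 n).mul_const _)
      (.of_forall fun m n => by
        rw [norm_mul]
        exact mul_le_mul_of_nonneg_right (hC m n) (norm_nonneg _))
  have hprod : Tendsto (fun m : ℕ => ∑' n : ℤ, centralQBinom (q ^ 2) m n * (x ^ n * q ^ (n ^ 2)))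
      atTop (𝓝 (∏' j : ℕ, (1 + x * q ^ (2 * j + 1)) * (1 + x⁻¹ * q ^ (2 * j + 1)))) := by
    simp_rw [tsum_centralQBinom_mul_eq_prod hq hq0 hx]
    exact ((multipliable_one_add_mul_pow hq x two_ne_zero 1).mul
      (multipliable_one_add_mul_pow hq x⁻¹ two_ne_zero 1)).hasProd.tendsto_prod_nat
  rw [← tendsto_nhds_unique hsum hprod, tsum_mul_left, ← mul_assoc,
    mul_inv_cancel₀ (tprod_one_sub_pow_succ_ne_zero hq2), one_mul]

lemma tsum_neg_one_zpow_mul_zpow_sq {q : ℂ} (hq : ‖q‖ < 1) (hq0 : q ≠ 0) :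
    ∑' n : ℤ, (-1) ^ n * q ^ (n ^ 2)
      = (∏' j : ℕ, (1 - (q ^ 2) ^ (j + 1))) * (∏' j : ℕ, (1 - q ^ (2 * j + 1))) ^ 2 := by
  have hodd : Multipliable fun j : ℕ => 1 - q ^ (2 * j + 1) :=
    (multipliable_one_add_mul_pow hq (-1) two_ne_zero 1).congr fun j => by ring
  rw [jacobi_triple_product hq hq0 (by norm_num), ← hodd.tprod_pow]
  congr 2 with j
  ring

lemma tsum_zpow_mul_zpow_sq_self {q : ℂ} (hq : ‖q‖ < 1) (hq0 : q ≠ 0) :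
    ∑' n : ℤ, q ^ n * q ^ (n ^ 2)
      = 2 * (∏' j : ℕ, (1 - (q ^ 2) ^ (j + 1))) * (∏' j : ℕ, (1 + (q ^ 2) ^ (j + 1))) ^ 2 := by
  have hq2 : ‖q ^ 2‖ < 1 := norm_pow_lt_one hq two_ne_zero
  have hsucc : Multipliable fun j : ℕ => 1 + (q ^ 2) ^ (j + 1) :=
    (multipliable_one_add_mul_pow hq2 1 one_ne_zero 1).congr fun j => by ring
  have hall : Multipliable fun j : ℕ => 1 + (q ^ 2) ^ j :=
    (multipliable_one_add_mul_pow hq2 1 one_ne_zero 0).congr fun j => by ring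
  have hfactor (j : ℕ) : (1 + q * q ^ (2 * j + 1)) * (1 + q⁻¹ * q ^ (2 * j + 1))
      = (1 + (q ^ 2) ^ (j + 1)) * (1 + (q ^ 2) ^ j) := by
    rw [pow_succ' q (2 * j), inv_mul_cancel_left₀ hq0]
    ring
  rw [jacobi_triple_product hq hq0 hq0, tprod_congr hfactor, hsucc.tprod_mul hall,
    tprod_eq_zero_mul' (f := fun j => 1 + (q ^ 2) ^ j) hsucc]
  ring

lemma norm_cexp_pi_mul_I_lt_one {τ : ℂ} (hτ : 0 < τ.im) : ‖cexp (π * I * τ)‖ < 1 := by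
  rw [Complex.norm_exp, Real.exp_lt_one_iff]
  simp [hτ, Real.pi_pos]

lemma dedekindEta_eq_mul_tprod (τ : ℂ) :
    dedekindEta τ = cexp (π * I * τ / 12) * ∏' n : ℕ, (1 - cexp (2 * π * I * τ) ^ (n + 1)) := by
  simp_rw [dedekindEta, ← Complex.exp_nat_mul]
  push_cast
  ring_nf

lemma dedekindEta_ne_zero {τ : ℂ} (hτ : 0 < τ.im) : dedekindEta τ ≠ 0 := by
  have h2τ : 0 < (2 * τ).im := by simpa using hτ
  rw [dedekindEta_eq_mul_tprod]
  refine mul_ne_zero (Complex.exp_ne_zero _) (tprod_one_sub_pow_succ_ne_zero ?_)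
  convert norm_cexp_pi_mul_I_lt_one h2τ using 3
  ring

lemma theta01_zero (τ : ℂ) : theta01 τ 0 = ∑' n : ℤ, (-1) ^ n * cexp (π * I * τ) ^ (n ^ 2) := by
  refine tsum_congr fun n => ?_
  rw [mul_zero, Complex.exp_zero, mul_one, ← Complex.exp_int_mul]
  push_cast
  ring_nf

lemma theta10_zero (τ : ℂ) :
    theta10 τ 0
      = cexp (π * I * τ / 4) * ∑' n : ℤ, cexp (π * I * τ) ^ n * cexp (π * I * τ) ^ (n ^ 2) := by
  rw [← tsum_mul_left]
  refine tsum_congr fun n => ?_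
  rw [mul_zero, Complex.exp_zero, one_mul, ← Complex.exp_int_mul, ← Complex.exp_int_mul,
    ← Complex.exp_add, ← Complex.exp_add]
  push_cast
  ring_nf

lemma theta01_zero_mul_dedekindEta {τ : ℂ} (hτ : 0 < τ.im) :
    theta01 τ 0 * dedekindEta τ = dedekindEta (τ / 2) ^ 2 := by
  set P := cexp (π * I * τ) with hP
  have hP1 : ‖P‖ < 1 := norm_cexp_pi_mul_I_lt_one hτ
  have hsplit : ∏' n : ℕ, (1 - P ^ (n + 1))
      = (∏' j : ℕ, (1 - P ^ (2 * j + 1))) * ∏' j : ℕ, (1 - (P ^ 2) ^ (j + 1)) := by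
    rw [← tprod_even_mul_odd (f := fun n : ℕ => 1 - P ^ (n + 1))
      ((multipliable_one_add_mul_pow hP1 (-1) two_ne_zero 1).congr fun j => by ring)
      ((multipliable_one_add_mul_pow hP1 (-1) two_ne_zero 2).congr fun j => by ring)]
    congr 1
    exact tprod_congr fun j => by ring
  have hexp : cexp (π * I * (τ / 2) / 12) ^ 2 = cexp (π * I * τ / 12) := by
    rw [← Complex.exp_nat_mul]
    ring_nf
  rw [theta01_zero, tsum_neg_one_zpow_mul_zpow_sq hP1 (Complex.exp_ne_zero _),
    dedekindEta_eq_mul_tprod, dedekindEta_eq_mul_tprod,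
    show cexp (2 * π * I * (τ / 2)) = P by rw [hP]; ring_nf, show cexp (2 * π * I * τ) = P ^ 2 by
      rw [← Complex.exp_nat_mul]; ring_nf, hsplit, mul_pow, hexp]
  ring

lemma theta10_zero_mul_dedekindEta {τ : ℂ} (hτ : 0 < τ.im) :
    theta10 τ 0 * dedekindEta τ = 2 * dedekindEta (2 * τ) ^ 2 := by
  set P := cexp (π * I * τ) with hP
  have hP1 : ‖P‖ < 1 := norm_cexp_pi_mul_I_lt_one hτ
  have hP2 : ‖P ^ 2‖ < 1 := norm_pow_lt_one hP1 two_ne_zero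
  have hsplit : ∏' n : ℕ, (1 - ((P ^ 2) ^ 2) ^ (n + 1))
      = (∏' j : ℕ, (1 - (P ^ 2) ^ (j + 1))) * ∏' j : ℕ, (1 + (P ^ 2) ^ (j + 1)) := by
    rw [← Multipliable.tprod_mul (ModularForm.multipliable_one_sub_pow hP2)
      ((multipliable_one_add_mul_pow hP2 1 one_ne_zero 1).congr fun j => by ring)]
    congr 1 with j
    ring
  have hexp : cexp (π * I * τ / 4) * cexp (π * I * τ / 12) = cexp (π * I * (2 * τ) / 12) ^ 2 := by
    rw [← Complex.exp_add, ← Complex.exp_nat_mul]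
    ring_nf
  rw [theta10_zero, tsum_zpow_mul_zpow_sq_self hP1 (Complex.exp_ne_zero _),
    dedekindEta_eq_mul_tprod, dedekindEta_eq_mul_tprod,
    show cexp (2 * π * I * (2 * τ)) = (P ^ 2) ^ 2 by
      rw [← pow_mul, ← Complex.exp_nat_mul]; ring_nf,
    show cexp (2 * π * I * τ) = P ^ 2 by rw [← Complex.exp_nat_mul]; ring_nf, hsplit]
  linear_combination (2 * (∏' j : ℕ, (1 - (P ^ 2) ^ (j + 1))) ^ 2
    * (∏' j : ℕ, (1 + (P ^ 2) ^ (j + 1))) ^ 2) * hexp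

def sumDiffEquiv : (ℤ × ℤ) ⊕ (ℤ × ℤ) ≃ ℤ × ℤ where
  toFun := Sum.elim (fun p => (p.1 + p.2, p.1 - p.2)) fun p => (p.1 + p.2 + 1, p.1 - p.2)
  invFun p := if (p.1 + p.2) % 2 = 0 then .inl ((p.1 + p.2) / 2, (p.1 - p.2) / 2)
    else .inr ((p.1 + p.2 - 1) / 2, (p.1 - p.2 - 1) / 2)
  left_inv := by
    rintro (⟨a, b⟩ | ⟨a, b⟩)
    · simp only [Sum.elim_inl, show (a + b + (a - b)) % 2 = 0 by omega, if_true]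
      congr <;> omega
    · simp only [Sum.elim_inr, show ¬ (a + b + 1 + (a - b)) % 2 = 0 by omega, if_false]
      congr <;> omega
  right_inv := by
    rintro ⟨m, n⟩
    by_cases h : (m + n) % 2 = 0
    · simp only [h, if_true, Sum.elim_inl]
      congr <;> omega
    · simp only [h, if_false, Sum.elim_inr]
      congr <;> omega

lemma tsum_mul_tsum_eq_add_of_summable_norm {f g : ℤ → ℂ} (hf : Summable fun n => ‖f n‖)
    (hg : Summable fun n => ‖g n‖) :
    (∑' n, f n) * (∑' n, g n) = ∑' p : ℤ × ℤ, f (p.1 + p.2) * g (p.1 - p.2)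
      + ∑' p : ℤ × ℤ, f (p.1 + p.2 + 1) * g (p.1 - p.2) := by
  have hfg : Summable fun p : ℤ × ℤ => f p.1 * g p.2 := (summable_mul_of_summable_norm hf hg)
  rw [tsum_mul_tsum_of_summable_norm hf hg, ← sumDiffEquiv.tsum_eq]
  exact Summable.tsum_sum (f := fun s => f (sumDiffEquiv s).1 * g (sumDiffEquiv s).2)
    (hfg.comp_injective (sumDiffEquiv.injective.comp Sum.inl_injective))
    (hfg.comp_injective (sumDiffEquiv.injective.comp Sum.inr_injective))

lemma summable_norm_jacobiTheta₂_term (z : ℂ) {τ : ℂ} (hτ : 0 < τ.im) :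
    Summable fun n : ℤ => ‖jacobiTheta₂_term n z τ‖ :=
  summable_norm_iff.mpr ((summable_jacobiTheta₂_term_iff z τ).mpr hτ)

lemma theta00_eq_tsum (τ z : ℂ) : theta00 τ z = ∑' n : ℤ, jacobiTheta₂_term n z τ :=
  tsum_congr fun n => by rw [jacobiTheta₂_term, ← Complex.exp_add]; ring_nf

lemma theta01_eq_tsum (τ z : ℂ) :
    theta01 τ z = ∑' n : ℤ, (-1) ^ n * jacobiTheta₂_term n z τ :=
  tsum_congr fun n => by rw [jacobiTheta₂_term, mul_assoc, ← Complex.exp_add]; ring_nf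

def theta10Term (τ z : ℂ) (n : ℤ) : ℂ :=
  cexp (π * I * z + π * I * τ / 4) * jacobiTheta₂_term n (z + τ / 2) τ

lemma theta10_eq_tsum (τ z : ℂ) : theta10 τ z = ∑' n : ℤ, theta10Term τ z n :=
  tsum_congr fun n => by
    rw [theta10Term, jacobiTheta₂_term, ← Complex.exp_add, ← Complex.exp_add]
    ring_nf

lemma summable_norm_theta10Term {τ : ℂ} (hτ : 0 < τ.im) (z : ℂ) :
    Summable fun n : ℤ => ‖theta10Term τ z n‖ := by
  simpa only [theta10Term, norm_mul] using
    (summable_norm_jacobiTheta₂_term (z + τ / 2) hτ).mul_left _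

lemma theta01_mul_theta01_zero {τ : ℂ} (hτ : 0 < τ.im) (z : ℂ) :
    theta01 τ z * theta01 τ 0 = theta00 (2 * τ) z ^ 2 - theta10 (2 * τ) z ^ 2 := by
  have h2τ : 0 < (2 * τ).im := by simpa using hτ
  have hsign (z : ℂ) : Summable fun n : ℤ => ‖(-1) ^ n * jacobiTheta₂_term n z τ‖ := by
    simpa using summable_norm_jacobiTheta₂_term z hτ
  have heven (a b : ℤ) : (-1) ^ (a + b) * jacobiTheta₂_term (a + b) z τ
      * ((-1) ^ (a - b) * jacobiTheta₂_term (a - b) 0 τ)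
      = jacobiTheta₂_term a z (2 * τ) * jacobiTheta₂_term b z (2 * τ) := by
    rw [mul_mul_mul_comm, ← zpow_add₀ (by norm_num), Even.neg_one_zpow ⟨a, by ring⟩, one_mul]
    simp only [jacobiTheta₂_term, ← Complex.exp_add]
    push_cast
    ring_nf
  have hodd (a b : ℤ) : (-1) ^ (a + b + 1) * jacobiTheta₂_term (a + b + 1) z τ
      * ((-1) ^ (a - b) * jacobiTheta₂_term (a - b) 0 τ)
      = -(theta10Term (2 * τ) z a * theta10Term (2 * τ) z b) := by
    rw [mul_mul_mul_comm, ← zpow_add₀ (by norm_num), Odd.neg_one_zpow ⟨a, by ring⟩, neg_one_mul]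
    simp only [theta10Term, jacobiTheta₂_term, ← Complex.exp_add]
    push_cast
    ring_nf
  rw [theta01_eq_tsum, theta01_eq_tsum, tsum_mul_tsum_eq_add_of_summable_norm (hsign z) (hsign 0),
    theta00_eq_tsum, theta10_eq_tsum]
  simp only [heven, hodd, tsum_neg, sq]
  rw [← tsum_mul_tsum_of_summable_norm (summable_norm_jacobiTheta₂_term z h2τ)
      (summable_norm_jacobiTheta₂_term z h2τ),
    ← tsum_mul_tsum_of_summable_norm (summable_norm_theta10Term h2τ z)
      (summable_norm_theta10Term h2τ z), sub_eq_add_neg]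

lemma theta10_mul_theta10_zero {τ : ℂ} (hτ : 0 < τ.im) (z : ℂ) :
    theta10 τ z * theta10 τ 0 = 2 * theta00 (2 * τ) z * theta10 (2 * τ) z := by
  have h2τ : 0 < (2 * τ).im := by simpa using hτ
  have heven (a b : ℤ) : theta10Term τ z (a + b) * theta10Term τ 0 (a - b)
      = theta10Term (2 * τ) z a * jacobiTheta₂_term b z (2 * τ) := by
    simp only [theta10Term, jacobiTheta₂_term, ← Complex.exp_add]
    push_cast
    ring_nf
  have hodd (a b : ℤ) : theta10Term τ z (a + b + 1) * theta10Term τ 0 (a - b)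
      = jacobiTheta₂_term (a + 1) z (2 * τ) * theta10Term (2 * τ) z b := by
    simp only [theta10Term, jacobiTheta₂_term, ← Complex.exp_add]
    push_cast
    ring_nf
  have hshift : ∑' a : ℤ, jacobiTheta₂_term (a + 1) z (2 * τ)
      = ∑' a : ℤ, jacobiTheta₂_term a z (2 * τ) :=
    (Equiv.addRight (1 : ℤ)).tsum_eq (jacobiTheta₂_term · z (2 * τ))
  have hshifted : Summable fun a : ℤ => ‖jacobiTheta₂_term (a + 1) z (2 * τ)‖ :=
    (summable_norm_jacobiTheta₂_term z h2τ).comp_injective (add_left_injective 1)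
  rw [theta10_eq_tsum τ z, theta10_eq_tsum τ 0, theta00_eq_tsum, theta10_eq_tsum (2 * τ) z,
    tsum_mul_tsum_eq_add_of_summable_norm (summable_norm_theta10Term hτ z)
      (summable_norm_theta10Term hτ 0)]
  simp only [heven, hodd]
  rw [← tsum_mul_tsum_of_summable_norm (summable_norm_theta10Term h2τ z)
      (summable_norm_jacobiTheta₂_term z h2τ),
    ← tsum_mul_tsum_of_summable_norm hshifted (summable_norm_theta10Term h2τ z), hshift]
  ring

theorem stmt15 (τ z : ℂ) (hτ : 0 < τ.im)
    (h1 : theta10 (2*τ) z ≠ 0) (h2 : theta00 (2*τ) z ≠ 0) (h3 : theta10 τ z ≠ 0) :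
    theta00 (2*τ) z / theta10 (2*τ) z - theta10 (2*τ) z / theta00 (2*τ) z =
      ((dedekindEta (τ/2))^2 / (dedekindEta (2*τ))^2) * (theta01 τ z / theta10 τ z) := by
  have hA := theta01_mul_theta01_zero hτ z
  have hB := theta10_mul_theta10_zero hτ z
  have h01 := theta01_zero_mul_dedekindEta hτ
  have h10 := theta10_zero_mul_dedekindEta hτ
  rw [div_sub_div _ _ h1 h2, div_mul_div_comm, div_eq_div_iff (mul_ne_zero h1 h2)
    (mul_ne_zero (pow_ne_zero 2 (dedekindEta_ne_zero (by simpa using hτ))) h3)]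
  linear_combination (-(dedekindEta (2 * τ)) ^ 2 * theta10 τ z) * hA
    + (theta01 τ z * theta10 (2 * τ) z * theta00 (2 * τ) z) * h01
    + (theta01 τ z * theta01 τ 0 * dedekindEta τ / 2) * hB
    - (theta01 τ z * theta01 τ 0 * theta10 τ z / 2) * h10

end
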